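/- Let λ be a partition of n with variables f_{i,j} and Wronskian coefficients r_s as in the standard setup. Then for every variable f_{i,j}, the linear monomial f_{i,j} occurs with nonzero coefficient in r_j (the coefficient of u^{n−j} in Wr(f_1,…,f_n)). -/

import Mathlib

/-- `d_i = λ_i + n − i`, with rows indexed by `i : Fin n` (so `i` stands for row `i+1`). -/
def dSeq (n : ℕ) (lam : Fin n → ℕ) (i : Fin n) : ℕ := lam i + (n - 1 - (i : ℕ))

/-- `P = {d_1, …, d_n}`. -/
def dSet (n : ℕ) (lam : Fin n → ℕ) : Finset ℕ := Finset.image (dSeq n lam) Finset.univ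

/-- `f_i = u^{d_i} + Σ_{j : 1 ≤ j ≤ d_i, d_i−j ∉ P} f_{i,j} u^{d_i−j}`, a polynomial in `u`
over the polynomial ring `ℂ[f_{i,j}]` (the variable `f_{i,j}` is `MvPolynomial.X (i,j)`). -/
noncomputable def rowPoly (n : ℕ) (lam : Fin n → ℕ) (i : Fin n) :
    Polynomial (MvPolynomial (Fin n × ℕ) ℂ) :=
  Polynomial.X ^ (dSeq n lam i) +
    ∑ j ∈ (Finset.Icc 1 (dSeq n lam i)).filter (fun j => dSeq n lam i - j ∉ dSet n lam),
      Polynomial.C (MvPolynomial.X (i, j)) * Polynomial.X ^ (dSeq n lam i - j)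

/-- The Wronskian `Wr(f_1,…,f_n)`. -/
noncomputable def wronskianPoly (n : ℕ) (lam : Fin n → ℕ) :
    Polynomial (MvPolynomial (Fin n × ℕ) ℂ) :=
  Matrix.det (Matrix.of fun a b : Fin n => Polynomial.derivative^[(a : ℕ)] (rowPoly n lam b))

/-- `r_s`: the coefficient of `u^{n−s}` in `Wr(f_1,…,f_n)`. -/
noncomputable def rCoeff (n : ℕ) (lam : Fin n → ℕ) (s : ℕ) : MvPolynomial (Fin n × ℕ) ℂ :=
  (wronskianPoly n lam).coeff (n - s)

/-!
Send `f_{i,j}` to a new variable `t` and every other `f_{k,l}` to `0`: the coefficient of the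
linear monomial `f_{i,j}` in `r_j` becomes the coefficient of `t u^{n-j}` in the image of the
Wronskian. By multilinearity in column `i` that image is
`Wr(u^{d_1}, …, u^{d_n}) + t · Wr(u^{e_1}, …, u^{e_n})`, where `e` agrees with `d` except
`e_i = d_i - j`. A Wronskian of monomials `u^{e_b}` is `det((e_b)_{(a)}) · u^{Σ e_b - Σ b}`, and
this falling-factorial determinant is the Vandermonde determinant of the `e_b`, nonzero because
`d_i - j ∉ P` keeps `e` injective. Since `|λ| = n` gives `Σ d_b = n + Σ b`, the exponent of the
second term is `n - j`, while the first term does not involve `t`.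
-/

open Polynomial Matrix

theorem Function.Injective.update {α β : Type*} [DecidableEq α] {f : α → β}
    (hf : Function.Injective f) (i : α) {b : β} (hb : b ∉ Set.range f) :
    Function.Injective (Function.update f i b) := by
  intro a a' h
  by_cases ha : a = i <;> by_cases ha' : a' = i
  · exact ha.trans ha'.symm
  · rw [ha, Function.update_self, Function.update_of_ne ha'] at h
    exact absurd ⟨a', h.symm⟩ hb
  · rw [ha', Function.update_self, Function.update_of_ne ha] at h
    exact absurd ⟨a, h⟩ hb
  · rw [Function.update_of_ne ha, Function.update_of_ne ha'] at h
    exact hf h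

namespace Polynomial

variable {R : Type*} [CommRing R] {n : ℕ}

noncomputable def wronskianMatrix (f : Fin n → R[X]) : Matrix (Fin n) (Fin n) R[X] :=
  of fun a b => derivative^[a] (f b)

theorem map_det_wronskianMatrix {S : Type*} [CommRing S] (φ : R →+* S) (f : Fin n → R[X]) :
    (wronskianMatrix f).det.map φ = (wronskianMatrix fun b => (f b).map φ).det := by
  rw [← coe_mapRingHom, RingHom.map_det]
  congr 1
  ext a b
  simp [wronskianMatrix, iterate_derivative_map]

theorem wronskianMatrix_update (f : Fin n → R[X]) (i : Fin n) (p : R[X]) :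
    wronskianMatrix (Function.update f i p) =
      (wronskianMatrix f).updateCol i fun a => derivative^[a] p := by
  ext a b
  rcases eq_or_ne b i with rfl | hb
  · simp [wronskianMatrix]
  · simp [wronskianMatrix, hb]

theorem det_wronskianMatrix_update_add_C_mul (f : Fin n → R[X]) (i : Fin n) (c : R) (g : R[X]) :
    (wronskianMatrix (Function.update f i (f i + C c * g))).det =
      (wronskianMatrix f).det + C c * (wronskianMatrix (Function.update f i g)).det := by
  have hcol : (fun a : Fin n => derivative^[a] (f i + C c * g)) =
      (fun a : Fin n => derivative^[a] (f i)) + C c • fun a : Fin n => derivative^[a] g := by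
    ext1 a
    simp [iterate_map_add, iterate_derivative_C_mul]
  rw [wronskianMatrix_update, wronskianMatrix_update, hcol, det_updateCol_add,
    det_updateCol_smul]
  congr 2
  exact updateCol_eq_self _ i

theorem map_det_wronskianMatrix_X_pow {S : Type*} [CommRing S] (φ : R →+* S) (e : Fin n → ℕ) :
    (wronskianMatrix fun b => (X ^ e b : R[X])).det.map φ =
      (wronskianMatrix fun b => (X ^ e b : S[X])).det := by
  simp [map_det_wronskianMatrix]

theorem det_wronskianMatrix_X_pow (e : Fin n → ℕ) :
    (wronskianMatrix fun b => (X ^ e b : R[X])).det =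
      C (of fun a b : Fin n => ((e b).descFactorial a : R)).det *
        X ^ (∑ b, e b - ∑ b : Fin n, (b : ℕ)) := by
  simp only [det_apply', map_sum, Finset.sum_mul, wronskianMatrix, of_apply,
    iterate_derivative_X_pow_eq_C_mul]
  refine Finset.sum_congr rfl fun σ _ => ?_
  rw [Finset.prod_mul_distrib, ← map_prod, Finset.prod_pow_eq_pow_sum, map_mul, map_intCast,
    mul_assoc]
  by_cases hσ : ∀ b, (σ b : ℕ) ≤ e b
  · rw [Finset.sum_tsub_distrib _ fun b _ => hσ b, Equiv.sum_comp σ fun b => (b : ℕ)]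
  · obtain ⟨b, hb⟩ := not_forall.mp hσ
    have hzero : ∏ b, ((e b).descFactorial (σ b) : R) = 0 :=
      Finset.prod_eq_zero (Finset.mem_univ b)
        (by rw [Nat.descFactorial_eq_zero_iff_lt.mpr (not_le.mp hb), Nat.cast_zero])
    rw [hzero, map_zero, zero_mul, zero_mul]

theorem det_descFactorial_eq_det_vandermonde [IsDomain R] (e : Fin n → ℕ) :
    (of fun a b : Fin n => ((e b).descFactorial a : R)).det =
      (vandermonde fun b => (e b : R)).det := by
  rw [det_eval_matrixOfPolynomials_eq_det_vandermonde _ (fun a => descPochhammer R a)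
    (fun a => descPochhammer_natDegree R a) (fun a => monic_descPochhammer R a),
    ← det_transpose]
  congr 1
  ext a b
  simp [descPochhammer_eval_eq_descFactorial]

end Polynomial

namespace MvPolynomial

theorem coeff_eval₂Hom_C_single_X {R σ : Type*} [CommSemiring R] [DecidableEq σ] (v : σ)
    (p : MvPolynomial σ R) (k : ℕ) :
    (eval₂Hom Polynomial.C (Pi.single v Polynomial.X) p).coeff k =
      p.coeff (Finsupp.single v k) := by
  induction p using induction_on' with
  | monomial u c =>
    rw [eval₂Hom_monomial, coeff_monomial]
    by_cases hu : u = Finsupp.single v (u v)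
    · rw [hu, Finsupp.prod_single_index (by simp), Pi.single_eq_same, Polynomial.coeff_C_mul_X_pow]
      exact if_congr (by rw [(Finsupp.single_injective v).eq_iff, eq_comm]) rfl rfl
    · obtain ⟨w, hwv, huw⟩ : ∃ w ≠ v, u w ≠ 0 := by
        by_contra! h
        refine hu (Finsupp.ext fun w => ?_)
        rcases eq_or_ne w v with rfl | hwv
        · simp
        · simp [h w hwv, Finsupp.single_eq_of_ne hwv]
      have hprod : u.prod (fun w m => (Pi.single v Polynomial.X : σ → R[X]) w ^ m) = 0 :=
        Finset.prod_eq_zero (Finsupp.mem_support_iff.mpr huw)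
          (by simp [Pi.single_eq_of_ne hwv, zero_pow huw])
      have hne : u ≠ Finsupp.single v k := fun h => huw (by simp [h, Finsupp.single_eq_of_ne hwv])
      rw [hprod, mul_zero, Polynomial.coeff_zero, if_neg hne]
  | add p q hp hq => rw [map_add, Polynomial.coeff_add, hp, hq, coeff_add]

end MvPolynomial

section Partition

variable {n : ℕ} {lam : Fin n → ℕ}

theorem strictAnti_dSeq (hanti : Antitone lam) : StrictAnti (dSeq n lam) := by
  intro b c hbc
  have hlam := hanti hbc.le
  have hbc' : (b : ℕ) < c := hbc
  have hc := c.is_lt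
  simp only [dSeq]
  omega

theorem sum_dSeq (hsum : ∑ i, lam i = n) : ∑ i, dSeq n lam i = n + ∑ i : Fin n, (i : ℕ) := by
  simp only [dSeq, Finset.sum_add_distrib, hsum,
    ← Equiv.sum_comp Fin.revPerm fun i : Fin n => n - 1 - (i : ℕ)]
  congr 1
  refine Finset.sum_congr rfl fun i _ => ?_
  simp only [Fin.revPerm_apply, Fin.val_rev]
  omega

theorem sum_update_dSeq_add (hsum : ∑ i, lam i = n) {i : Fin n} {j : ℕ} (hj : j ≤ dSeq n lam i) :
    ∑ b, Function.update (dSeq n lam) i (dSeq n lam i - j) b + j = n + ∑ b : Fin n, (b : ℕ) := by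
  rw [← sum_dSeq hsum, Finset.sum_update_of_mem (Finset.mem_univ i), ← Finset.erase_eq,
    ← Finset.add_sum_erase _ _ (Finset.mem_univ i)]
  omega

variable {i : Fin n} {j : ℕ}
    (hj : j ∈ (Finset.Icc 1 (dSeq n lam i)).filter fun j => dSeq n lam i - j ∉ dSet n lam)
include hj

theorem map_rowPoly_eval₂Hom_single :
    (fun b => (rowPoly n lam b).map (MvPolynomial.eval₂Hom C (Pi.single (i, j) X))) =
      Function.update (fun b => X ^ dSeq n lam b) i
        (X ^ dSeq n lam i + C X * X ^ (dSeq n lam i - j)) := by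
  funext b
  rcases eq_or_ne b i with rfl | hb
  · simp [rowPoly, Polynomial.map_sum, Pi.single_apply, apply_ite C, ite_mul, hj]
  · simp [rowPoly, Polynomial.map_sum, hb]

theorem map_wronskianPoly_eval₂Hom_single :
    (wronskianPoly n lam).map (MvPolynomial.eval₂Hom C (Pi.single (i, j) X)) =
      (wronskianMatrix fun b => (X ^ dSeq n lam b : ℂ[X])).det.map C +
        C X * (wronskianMatrix fun b =>
          (X ^ Function.update (dSeq n lam) i (dSeq n lam i - j) b : ℂ[X])).det.map C := by
  rw [wronskianPoly, ← wronskianMatrix, map_det_wronskianMatrix, map_rowPoly_eval₂Hom_single hj,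
    det_wronskianMatrix_update_add_C_mul, map_det_wronskianMatrix_X_pow,
    map_det_wronskianMatrix_X_pow]
  congr 4
  exact (Function.comp_update ((X : ℂ[X][X]) ^ ·) (dSeq n lam) i _).symm

end Partition

/-- Proposition: every variable `f_{i,j}` occurs, as a linear monomial with nonzero
coefficient, in the Wronskian coefficient `r_j`. -/
theorem linear_term_occurs_in_rCoeff (n : ℕ) (lam : Fin n → ℕ)
    (hanti : Antitone lam) (hsum : ∑ i, lam i = n)
    (i : Fin n) (j : ℕ) (hj1 : 1 ≤ j) (hj2 : j ≤ dSeq n lam i)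
    (hjP : dSeq n lam i - j ∉ dSet n lam) :
    MvPolynomial.coeff (Finsupp.single (i, j) 1) (rCoeff n lam j) ≠ 0 := by
  set e := Function.update (dSeq n lam) i (dSeq n lam i - j)
  have he : Function.Injective e :=
    (strictAnti_dSeq hanti).injective.update i (by simpa [dSet] using hjP)
  have hexp : ∑ b, e b - ∑ b : Fin n, (b : ℕ) = n - j := by
    have hsum_e : ∑ b, e b + j = n + ∑ b : Fin n, (b : ℕ) := sum_update_dSeq_add hsum hj2
    omega
  rw [rCoeff, ← MvPolynomial.coeff_eval₂Hom_C_single_X, ← coeff_map,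
    map_wronskianPoly_eval₂Hom_single (Finset.mem_filter.mpr ⟨Finset.mem_Icc.mpr ⟨hj1, hj2⟩, hjP⟩),
    coeff_add, coeff_C_mul, coeff_map, coeff_map, coeff_add, coeff_C_succ, coeff_X_mul,
    coeff_C_zero, zero_add, det_wronskianMatrix_X_pow, hexp, coeff_C_mul_X_pow, if_pos rfl,
    det_descFactorial_eq_det_vandermonde, det_vandermonde_ne_zero_iff]
  exact Nat.cast_injective.comp he
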